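/- The product in FPCM of two copies of the free monoid ℕ on one generator is the free commutative monoid on three generators. -/

import Mathlib

open CategoryTheory

/-- The elementary commutation relation on words generated by an independence relation. -/
def traceRel (E : Type) (I : Set (E × E)) : FreeMonoid E → FreeMonoid E → Prop :=
  fun x y => ∃ a b : E, (a, b) ∈ I ∧ x = FreeMonoid.of a * FreeMonoid.of b ∧
    y = FreeMonoid.of b * FreeMonoid.of a

/-- The congruence on the free monoid generated by commutation of independent pairs. -/
def traceCon (E : Type) (I : Set (E × E)) : Con (FreeMonoid E) := conGen (traceRel E I)

/-- The trace monoid `M(E,I)`. -/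
abbrev TraceMonoid (E : Type) (I : Set (E × E)) : Type := (traceCon E I).Quotient

/-- The canonical projection from words to traces. -/
def trcMk {E : Type} {I : Set (E × E)} : FreeMonoid E →* TraceMonoid E I :=
  (traceCon E I).mk'

/-- The generator of the trace monoid corresponding to an event `e`. -/
def trc {E : Type} {I : Set (E × E)} (e : E) : TraceMonoid E I :=
  trcMk (FreeMonoid.of e)

/-- `I` is an independence relation: irreflexive and symmetric. -/
structure IsIndep {E : Type} (I : Set (E × E)) : Prop where
  irrefl : ∀ a : E, (a, a) ∉ I
  symm : ∀ a b : E, (a, b) ∈ I → (b, a) ∈ I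

/-- A homomorphism of trace monoids is basic if it sends generators to generators or to `1`. -/
def IsBasic {E E' : Type} {I : Set (E × E)} {I' : Set (E' × E')}
    (f : TraceMonoid E I →* TraceMonoid E' I') : Prop :=
  ∀ e : E, (∃ e' : E', f (trc e) = trc e') ∨ f (trc e) = 1

/-- A basic homomorphism preserves independence. -/
def IsIndepPres {E E' : Type} {I : Set (E × E)} {I' : Set (E' × E')}
    (f : TraceMonoid E I →* TraceMonoid E' I') : Prop :=
  ∀ a b : E, (a, b) ∈ I → f (trc a) ≠ f (trc b) ∨ (f (trc a) = 1 ∧ f (trc b) = 1)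

/-- The monoid homomorphism out of a trace monoid induced by a map on generators whose
images commute at independent pairs. -/
def liftHom {E : Type} {I : Set (E × E)} {N : Type*} [Monoid N] (φ : E → N)
    (hφ : ∀ a b : E, (a, b) ∈ I → φ a * φ b = φ b * φ a) : TraceMonoid E I →* N :=
  (traceCon E I).lift (FreeMonoid.lift φ) (by
    apply Con.conGen_le.2
    rintro x y ⟨a, b, hab, rfl, rfl⟩
    rw [Con.ker_rel]
    simp only [map_mul, FreeMonoid.lift_eval_of]
    exact hφ a b hab)

@[simp] theorem liftHom_trc {E : Type} {I : Set (E × E)} {N : Type*} [Monoid N] (φ : E → N)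
    (hφ : ∀ a b : E, (a, b) ∈ I → φ a * φ b = φ b * φ a) (e : E) :
    liftHom φ hφ (trc (I := I) e) = φ e := by
  show (traceCon E I).lift _ _ ((traceCon E I).mk' (FreeMonoid.of e)) = φ e
  refine Eq.trans (Con.lift_mk' ..) ?_
  simp

theorem trc_comm {E : Type} {I : Set (E × E)} {a b : E} (h : (a, b) ∈ I) :
    (trc a : TraceMonoid E I) * trc b = trc b * trc a := by
  show trcMk (FreeMonoid.of a) * trcMk (FreeMonoid.of b) =
    trcMk (FreeMonoid.of b) * trcMk (FreeMonoid.of a)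
  rw [← map_mul, ← map_mul]
  exact (Con.eq _).2 (ConGen.Rel.of _ _ ⟨a, b, h, rfl, rfl⟩)

theorem isBasic_id {E : Type} {I : Set (E × E)} :
    IsBasic (MonoidHom.id (TraceMonoid E I)) := fun e => Or.inl ⟨e, rfl⟩

theorem isBasic_comp {E₁ E₂ E₃ : Type} {I₁ : Set (E₁ × E₁)} {I₂ : Set (E₂ × E₂)}
    {I₃ : Set (E₃ × E₃)} {f : TraceMonoid E₁ I₁ →* TraceMonoid E₂ I₂}
    {g : TraceMonoid E₂ I₂ →* TraceMonoid E₃ I₃} (hf : IsBasic f) (hg : IsBasic g) :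
    IsBasic (g.comp f) := by
  intro e
  rcases hf e with ⟨e', he⟩ | he
  · rcases hg e' with ⟨e'', he''⟩ | he''
    · exact Or.inl ⟨e'', by simp [MonoidHom.comp_apply, he, he'']⟩
    · exact Or.inr (by simp [MonoidHom.comp_apply, he, he''])
  · exact Or.inr (by simp [MonoidHom.comp_apply, he])
/-- An object of the category `FPCM`: a set of events with an independence relation. -/
structure FPCMObj where
  E : Type
  I : Set (E × E)
  indep : IsIndep I

/-- The category `FPCM` of trace monoids and basic homomorphisms. -/
instance : Category FPCMObj where
  Hom X Y := {f : TraceMonoid X.E X.I →* TraceMonoid Y.E Y.I // IsBasic f}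
  id _ := ⟨MonoidHom.id _, isBasic_id⟩
  comp f g := ⟨g.1.comp f.1, isBasic_comp f.2 g.2⟩
  id_comp _ := Subtype.ext (MonoidHom.comp_id _)
  comp_id _ := Subtype.ext (MonoidHom.id_comp _)
  assoc _ _ _ := Subtype.ext rfl

open CategoryTheory.Limits

/-- The trace monoid `ℕ` on one generator with empty independence relation. -/
def natFPCMObj : FPCMObj where
  E := Unit
  I := ∅
  indep := ⟨fun _ h => h, fun _ _ h => h⟩

/-- The free commutative monoid on three generators, as an object of `FPCM`. -/
def freeComm3 : FPCMObj where
  E := Fin 3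
  I := {p | p.1 ≠ p.2}
  indep := ⟨fun _ h => h rfl, fun _ _ h e => h e.symm⟩

/-!
A basic homomorphism into `ℕ` is determined by the set of generators it kills, so a pair of
them amounts to sorting the generators into four classes: killed by both, by the first only, by
the second only, or by neither. The last three classes correspond to the generators `(*,e₂)`,
`(e₁,*)`, `(e₁,e₂)` of `ℕ³`, and since these pairwise commute, the universal map may send each
generator to the generator of its class (or to `1`). Uniqueness holds because a generator or `1`
of `ℕ³` is determined by its two projections.
-/

section TraceMonoid

variable {E : Type} {I : Set (E × E)}

theorem traceHom_ext {N : Type*} [Monoid N] {f g : TraceMonoid E I →* N}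
    (h : ∀ e, f (trc e) = g (trc e)) : f = g := by
  have hw : f.comp trcMk = g.comp trcMk := FreeMonoid.hom_eq h
  refine MonoidHom.ext fun x => ?_
  obtain ⟨w, rfl⟩ := Con.mk'_surjective x
  exact DFunLike.congr_fun hw w

theorem trc_ne_one (e : E) : (trc e : TraceMonoid E I) ≠ 1 := by
  intro h
  have := congrArg (liftHom (fun _ : E => Multiplicative.ofAdd (1 : ℕ))
    (fun _ _ _ => mul_comm _ _)) h
  simp at this

def genOrOne : Set (TraceMonoid E I) := insert 1 (Set.range trc)

theorem isBasic_iff {E' : Type} {I' : Set (E' × E')} {f : TraceMonoid E' I' →* TraceMonoid E I} :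
    IsBasic f ↔ ∀ e, f (trc e) ∈ genOrOne := by
  simp only [IsBasic, genOrOne, Set.mem_insert_iff, Set.mem_range, eq_comm (b := f _)]
  exact forall_congr' fun _ => or_comm

theorem mul_comm_of_mem_genOrOne (hI : ∀ a b : E, a ≠ b → (a, b) ∈ I)
    {x y : TraceMonoid E I} (hx : x ∈ genOrOne) (hy : y ∈ genOrOne) : x * y = y * x := by
  rcases hx with rfl | ⟨a, rfl⟩
  · simp
  rcases hy with rfl | ⟨b, rfl⟩
  · simp
  rcases eq_or_ne a b with rfl | hab
  · rfl
  · exact trc_comm (hI a b hab)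

end TraceMonoid

-- The carriers of `natFPCMObj` and `freeComm3`, with the objects unfolded.
abbrev NatTM : Type := TraceMonoid Unit ∅
abbrev F3M : Type := TraceMonoid (Fin 3) {p | p.1 ≠ p.2}

theorem eq_one_or_eq_trc_of_mem_genOrOne {x : NatTM} (hx : x ∈ genOrOne) :
    x = 1 ∨ x = trc () := by
  rcases hx with rfl | ⟨⟨⟩, rfl⟩
  exacts [Or.inl rfl, Or.inr rfl]

/-- The generators `0`, `1`, `2` of `F3M` stand for the pairs `(e₁,*)`, `(*,e₂)`, `(e₁,e₂)`;
the first projection erases `1` and the second erases `0`. -/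
noncomputable def fstProj : F3M →* NatTM :=
  liftHom (fun i : Fin 3 => if i = 1 then 1 else trc ()) (fun _ _ _ => by split_ifs <;> simp)

noncomputable def sndProj : F3M →* NatTM :=
  liftHom (fun i : Fin 3 => if i = 0 then 1 else trc ()) (fun _ _ _ => by split_ifs <;> simp)

theorem fstProj_trc (i : Fin 3) : fstProj (trc i) = if i = 1 then 1 else trc () :=
  liftHom_trc _ _ i

theorem sndProj_trc (i : Fin 3) : sndProj (trc i) = if i = 0 then 1 else trc () :=
  liftHom_trc _ _ i

theorem isBasic_fstProj : IsBasic fstProj := by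
  refine isBasic_iff.2 fun i => ?_
  rw [fstProj_trc]
  split_ifs
  exacts [Or.inl rfl, Or.inr ⟨(), rfl⟩]

theorem isBasic_sndProj : IsBasic sndProj := by
  refine isBasic_iff.2 fun i => ?_
  rw [sndProj_trc]
  split_ifs
  exacts [Or.inl rfl, Or.inr ⟨(), rfl⟩]

open Classical in
noncomputable def pairGen (x y : NatTM) : F3M :=
  if x = 1 then (if y = 1 then 1 else trc 1) else (if y = 1 then trc 0 else trc 2)

theorem pairGen_mem_genOrOne (x y : NatTM) : pairGen x y ∈ genOrOne := by
  unfold pairGen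
  split_ifs
  exacts [Or.inl rfl, Or.inr ⟨_, rfl⟩, Or.inr ⟨_, rfl⟩, Or.inr ⟨_, rfl⟩]

theorem fstProj_pairGen {x : NatTM} (hx : x ∈ genOrOne) (y : NatTM) :
    fstProj (pairGen x y) = x := by
  rcases eq_one_or_eq_trc_of_mem_genOrOne hx with rfl | rfl <;>
    by_cases hy : y = 1 <;> simp [pairGen, fstProj_trc, hy, trc_ne_one]

theorem sndProj_pairGen (x : NatTM) {y : NatTM} (hy : y ∈ genOrOne) :
    sndProj (pairGen x y) = y := by
  rcases eq_one_or_eq_trc_of_mem_genOrOne hy with rfl | rfl <;>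
    by_cases hx : x = 1 <;> simp [pairGen, sndProj_trc, hx, trc_ne_one]

theorem pairGen_fstProj_sndProj {z : F3M} (hz : z ∈ genOrOne) :
    pairGen (fstProj z) (sndProj z) = z := by
  rcases hz with rfl | ⟨i, rfl⟩
  · simp [pairGen]
  · fin_cases i <;> simp [pairGen, fstProj_trc, sndProj_trc, trc_ne_one]

section ProdLift

variable {E : Type} {I : Set (E × E)} (f g : TraceMonoid E I →* NatTM)

noncomputable def prodLift : TraceMonoid E I →* F3M :=
  liftHom (fun e => pairGen (f (trc e)) (g (trc e))) fun _ _ _ =>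
    mul_comm_of_mem_genOrOne (fun _ _ => id) (pairGen_mem_genOrOne _ _) (pairGen_mem_genOrOne _ _)

theorem prodLift_trc (e : E) : prodLift f g (trc e) = pairGen (f (trc e)) (g (trc e)) :=
  liftHom_trc _ _ e

theorem isBasic_prodLift : IsBasic (prodLift f g) :=
  isBasic_iff.2 fun e => prodLift_trc f g e ▸ pairGen_mem_genOrOne _ _

variable {f g}

theorem fstProj_comp_prodLift (hf : IsBasic f) : fstProj.comp (prodLift f g) = f :=
  traceHom_ext fun e => by
    rw [MonoidHom.comp_apply, prodLift_trc, fstProj_pairGen (isBasic_iff.1 hf e)]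

theorem sndProj_comp_prodLift (hg : IsBasic g) : sndProj.comp (prodLift f g) = g :=
  traceHom_ext fun e => by
    rw [MonoidHom.comp_apply, prodLift_trc, sndProj_pairGen _ (isBasic_iff.1 hg e)]

theorem eq_prodLift {m : TraceMonoid E I →* F3M} (hm : IsBasic m)
    (hf : fstProj.comp m = f) (hg : sndProj.comp m = g) : m = prodLift f g :=
  traceHom_ext fun e => by
    rw [prodLift_trc, ← hf, ← hg]
    exact (pairGen_fstProj_sndProj (isBasic_iff.1 hm e)).symm

end ProdLift

/-- The product in `FPCM` of two copies of the free monoid on one generator is the free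
commutative monoid on three generators. -/
theorem prod_nat_nat_in_FPCM :
    ∃ c : BinaryFan natFPCMObj natFPCMObj,
      Nonempty (IsLimit c) ∧ Nonempty (c.pt ≅ freeComm3) := by
  let c : BinaryFan natFPCMObj natFPCMObj :=
    BinaryFan.mk (P := freeComm3) ⟨fstProj, isBasic_fstProj⟩ ⟨sndProj, isBasic_sndProj⟩
  refine ⟨c, ⟨BinaryFan.isLimitMk
    (fun s => ⟨prodLift s.fst.1 s.snd.1, isBasic_prodLift _ _⟩)
    (fun s => Subtype.ext (fstProj_comp_prodLift s.fst.2))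
    (fun s => Subtype.ext (sndProj_comp_prodLift s.snd.2))
    (fun s m hm₁ hm₂ => Subtype.ext (eq_prodLift m.2 (congrArg Subtype.val hm₁)
      (congrArg Subtype.val hm₂)))⟩, ⟨Iso.refl _⟩⟩
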